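/- Let G be a graph on n vertices with edge set E. Then Σ over ordered adjacent pairs (u,v) of d(u)·d(v) is at least (Σ_v d(v)^{3/2})² / n. -/

import Mathlib

/-!
Over the ordered adjacent pairs `(u, v)`, `√(d u)` is the product of `√(d u d v)` and `1 / √(d v)`
(note `d v > 0`), and it sums to `∑ d^{3/2}`. So Cauchy–Schwarz bounds `(∑ d^{3/2})²` by the
left-hand side times `∑_{(u,v)} 1 / d v = ∑_v d v / d v ≤ n`.
-/

open Finset

namespace Finset

theorem sq_sum_sum_le_sum_sum_mul_sum_sum {ι κ : Type*} (s : Finset ι) (t : ι → Finset κ)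
    {r f g : ι → κ → ℝ} (hf : ∀ i ∈ s, ∀ j ∈ t i, 0 ≤ f i j) (hg : ∀ i ∈ s, ∀ j ∈ t i, 0 ≤ g i j)
    (hr : ∀ i ∈ s, ∀ j ∈ t i, r i j ^ 2 ≤ f i j * g i j) :
    (∑ i ∈ s, ∑ j ∈ t i, r i j) ^ 2 ≤
      (∑ i ∈ s, ∑ j ∈ t i, f i j) * ∑ i ∈ s, ∑ j ∈ t i, g i j := by
  simp only [sum_sigma']
  exact sum_sq_le_sum_mul_sum_of_sq_le_mul _
    (fun x hx => hf _ (mem_sigma.1 hx).1 _ (mem_sigma.1 hx).2)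
    (fun x hx => hg _ (mem_sigma.1 hx).1 _ (mem_sigma.1 hx).2)
    (fun x hx => hr _ (mem_sigma.1 hx).1 _ (mem_sigma.1 hx).2)

end Finset

theorem Real.rpow_three_halves {x : ℝ} (hx : 0 ≤ x) : x ^ (3 / 2 : ℝ) = x * √x := by
  rw [show (3 / 2 : ℝ) = 1 + 1 / 2 by norm_num, Real.rpow_add' hx (by norm_num), Real.rpow_one,
    Real.sqrt_eq_rpow]

namespace SimpleGraph

variable {V : Type*} [Fintype V] (G : SimpleGraph V) [DecidableRel G.Adj]

theorem sum_sum_neighborFinset_left {M : Type*} [AddCommMonoid M] (f : V → M) :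
    ∑ u, ∑ _v ∈ G.neighborFinset u, f u = ∑ u, G.degree u • f u := by
  simp only [sum_const, card_neighborFinset_eq_degree]

theorem sum_sum_neighborFinset_right {M : Type*} [AddCommMonoid M] (f : V → M) :
    ∑ u, ∑ v ∈ G.neighborFinset u, f v = ∑ v, G.degree v • f v := by
  rw [sum_comm' (t' := univ) (s' := fun v => G.neighborFinset v) fun u v => by simp [G.adj_comm]]
  exact G.sum_sum_neighborFinset_left f

theorem sum_sum_neighborFinset_inv_degree_le_card :
    ∑ u, ∑ v ∈ G.neighborFinset u, (G.degree v : ℝ)⁻¹ ≤ Fintype.card V := by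
  rw [sum_sum_neighborFinset_right]
  calc ∑ v, G.degree v • (G.degree v : ℝ)⁻¹ ≤ ∑ _v : V, (1 : ℝ) :=
        sum_le_sum fun v _ => by rw [nsmul_eq_mul]; exact mul_inv_le_one
    _ = Fintype.card V := by simp

end SimpleGraph

open SimpleGraph in
/-- For a graph `G` on `n` vertices, the sum over ordered adjacent pairs `(u,v)` of
`d(u)·d(v)` is at least `(∑_v d(v)^{3/2})² / n`. -/
theorem stmt_10 {V : Type*} [Fintype V] (G : SimpleGraph V) [DecidableRel G.Adj] :
    ∑ u, ∑ v ∈ G.neighborFinset u, (G.degree u : ℝ) * (G.degree v : ℝ) ≥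
      (∑ v, (G.degree v : ℝ) ^ ((3 : ℝ) / 2)) ^ 2 / (Fintype.card V : ℝ) := by
  have hdeg_pos : ∀ u, ∀ v ∈ G.neighborFinset u, (0 : ℝ) < G.degree v := fun u v huv =>
    Nat.cast_pos.2 <| G.degree_pos_iff_exists_adj v |>.2 ⟨u, ((G.mem_neighborFinset u v).1 huv).symm⟩
  have hsum_sqrt : ∑ u, ∑ _v ∈ G.neighborFinset u, √(G.degree u : ℝ) =
      ∑ v, (G.degree v : ℝ) ^ ((3 : ℝ) / 2) := by
    simp only [sum_sum_neighborFinset_left, nsmul_eq_mul, Real.rpow_three_halves (Nat.cast_nonneg _)]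
  have hcs := sq_sum_sum_le_sum_sum_mul_sum_sum univ (fun u => G.neighborFinset u)
    (r := fun u _ => √(G.degree u : ℝ)) (f := fun u v => (G.degree u : ℝ) * G.degree v)
    (g := fun _ v => (G.degree v : ℝ)⁻¹) (fun _ _ _ _ => by positivity)
    (fun _ _ _ _ => by positivity) fun u _ v huv => by
      rw [Real.sq_sqrt (Nat.cast_nonneg _), mul_inv_cancel_right₀ (hdeg_pos u v huv).ne']
  rw [hsum_sqrt] at hcs
  refine div_le_of_le_mul₀ (Nat.cast_nonneg _) (by positivity) (hcs.trans ?_)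
  exact mul_le_mul_of_nonneg_left G.sum_sum_neighborFinset_inv_degree_le_card (by positivity)
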